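/- Let a < b be real numbers and let f : ℝ × ℝ → ℂ be continuous on [a,b] × [a,b]. Define G(x, y) := ∑_{n=1}^∞ f^{∗n}(x, y), the sum of the iterated Volterra powers. Then G is also a right ∗-resolvent of f: for all x, y ∈ [a,b] with y ≤ x, G(x, y) = f(x, y) + ∫_y^x G(x, ζ)·f(ζ, y) dζ. -/

import Mathlib

open MeasureTheory Set intervalIntegral

noncomputable def volterraComp (f l : ℝ × ℝ → ℂ) : ℝ × ℝ → ℂ :=
  fun p => ∫ ζ in p.2..p.1, f (p.1, ζ) * l (ζ, p.2)

/-- `volterraPow f n` is the iterated Volterra power `f^{∗(n+1)}`,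
so that `volterraPow f 0 = f^{∗1} = f`. -/
noncomputable def volterraPow (f : ℝ × ℝ → ℂ) : ℕ → ℝ × ℝ → ℂ
  | 0 => f
  | n + 1 => volterraComp f (volterraPow f n)

/-!
The `n`-th Volterra power of a kernel bounded by `M` on `[a, b]²` is bounded by
`M ^ (n + 1) * (x - y) ^ n / n!` on the triangle `a ≤ y ≤ x ≤ b`, so the Neumann series converges
absolutely there. Fubini on the triangle makes Volterra composition associative, hence
`f^{∗(n+2)} = f^{∗(n+1)} ∗ f`; summing over `n` and exchanging sum and integral by dominated
convergence gives the right resolvent equation. A Tietze extension of `f` from `[a, b]²` to a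
continuous kernel on the plane changes none of the powers on that triangle.
-/

universe u v

theorem ContinuousOn.exists_continuous_eqOn {X : Type u} {Y : Type v} [TopologicalSpace X]
    [NormalSpace X] [TopologicalSpace Y] [TietzeExtension.{u, v} Y] {s : Set X} (hs : IsClosed s)
    {f : X → Y} (hf : ContinuousOn f s) : ∃ g : X → Y, Continuous g ∧ EqOn g f s := by
  obtain ⟨g, hg⟩ := ContinuousMap.exists_restrict_eq hs ⟨_, hf.domRestrict⟩
  exact ⟨g, g.continuous, fun p hp => congr($hg ⟨p, hp⟩)⟩

theorem integral_integral_swap_triangle {E : Type*} [NormedAddCommGroup E] [NormedSpace ℝ E]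
    {F : ℝ × ℝ → E} (hF : Continuous F) {x y : ℝ} (hyx : y ≤ x) :
    ∫ ζ in y..x, ∫ s in y..ζ, F (ζ, s) = ∫ s in y..x, ∫ ζ in s..x, F (ζ, s) := by
  set μ := volume.restrict (Ioc y x)
  let H : ℝ → ℝ → E := fun ζ s => {p : ℝ × ℝ | p.2 ≤ p.1}.indicator F (ζ, s)
  have hH : Integrable (Function.uncurry H) (μ.prod μ) := by
    rw [Measure.prod_restrict, ← Measure.volume_eq_prod]
    refine ((hF.continuousOn.integrableOn_compact (isCompact_Icc.prod isCompact_Icc)).mono_set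
      (prod_mono Ioc_subset_Icc_self Ioc_subset_Icc_self)).indicator ?_
    exact measurableSet_le measurable_snd measurable_fst
  have inner_left : ∀ ζ ∈ Ioc y x, ∫ s in y..ζ, F (ζ, s) = ∫ s, H ζ s ∂μ := by
    intro ζ hζ
    have : (fun s => H ζ s) = (Iic ζ).indicator fun s => F (ζ, s) := by
      ext s; by_cases h : s ≤ ζ <;> simp [H, h]
    rw [integral_of_le hζ.1.le, this, setIntegral_indicator measurableSet_Iic, Ioc_inter_Iic,
      min_eq_right hζ.2]
  have inner_right : ∀ s ∈ Ioc y x, ∫ ζ in s..x, F (ζ, s) = ∫ ζ, H ζ s ∂μ := by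
    intro s hs
    have : (fun ζ => H ζ s) = (Ici s).indicator fun ζ => F (ζ, s) := by
      ext ζ; by_cases h : s ≤ ζ <;> simp [H, h]
    rw [integral_of_le hs.2, this, setIntegral_indicator measurableSet_Ici]
    have hIcc : Ioc y x ∩ Ici s = Icc s x := by
      ext ζ
      simp only [mem_inter_iff, mem_Ioc, mem_Ici, mem_Icc]
      grind [hs.1]
    rw [hIcc, integral_Icc_eq_integral_Ioc]
  rw [integral_of_le hyx, integral_of_le hyx, setIntegral_congr_fun measurableSet_Ioc inner_left,
    setIntegral_congr_fun measurableSet_Ioc inner_right]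
  exact integral_integral_swap hH

theorem continuous_volterraComp {f l : ℝ × ℝ → ℂ} (hf : Continuous f) (hl : Continuous l) :
    Continuous (volterraComp f l) := by
  set F : ℝ × ℝ → ℝ → ℂ := fun p ζ => f (p.1, ζ) * l (ζ, p.2)
  have hF : Continuous (Function.uncurry F) := by fun_prop
  have hΦ := continuous_parametric_primitive_of_continuous (a₀ := 0) (μ := volume) hF
  have hsplit : volterraComp f l = fun p => (∫ ζ in 0..p.1, F p ζ) - ∫ ζ in 0..p.2, F p ζ := by
    ext p
    have hint : ∀ c, IntervalIntegrable (F p) volume 0 c := fun c =>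
      (hF.uncurry_left p).intervalIntegrable 0 c
    exact (integral_interval_sub_left (hint _) (hint _)).symm
  rw [hsplit]
  exact (hΦ.comp (continuous_id.prodMk continuous_fst)).sub
    (hΦ.comp (continuous_id.prodMk continuous_snd))

theorem continuous_volterraPow {f : ℝ × ℝ → ℂ} (hf : Continuous f) :
    ∀ n, Continuous (volterraPow f n)
  | 0 => hf
  | n + 1 => continuous_volterraComp hf (continuous_volterraPow hf n)

theorem volterraComp_assoc {f g h : ℝ × ℝ → ℂ} (hf : Continuous f) (hg : Continuous g)
    (hh : Continuous h) {x y : ℝ} (hyx : y ≤ x) :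
    volterraComp (volterraComp f g) h (x, y) = volterraComp f (volterraComp g h) (x, y) := by
  have hF : Continuous fun p : ℝ × ℝ => f (x, p.1) * g p * h (p.2, y) := by fun_prop
  calc volterraComp (volterraComp f g) h (x, y)
      = ∫ s in y..x, ∫ ζ in s..x, f (x, ζ) * g (ζ, s) * h (s, y) := by
        simp only [volterraComp, ← intervalIntegral.integral_mul_const]
    _ = ∫ ζ in y..x, ∫ s in y..ζ, f (x, ζ) * g (ζ, s) * h (s, y) :=
        (integral_integral_swap_triangle hF hyx).symm
    _ = volterraComp f (volterraComp g h) (x, y) := by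
        simp only [volterraComp, ← intervalIntegral.integral_const_mul, mul_assoc]

theorem volterraPow_succ' {f : ℝ × ℝ → ℂ} (hf : Continuous f) (n : ℕ) {x y : ℝ} (hyx : y ≤ x) :
    volterraPow f (n + 1) (x, y) = volterraComp (volterraPow f n) f (x, y) := by
  induction n generalizing x with
  | zero => rfl
  | succ n ih =>
    have hPn := continuous_volterraPow hf n
    calc volterraPow f (n + 2) (x, y)
        = volterraComp f (volterraComp (volterraPow f n) f) (x, y) := by
          refine integral_congr fun ζ hζ => ?_
          rw [uIcc_of_le hyx] at hζ
          simp only [ih hζ.1]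
      _ = volterraComp (volterraPow f (n + 1)) f (x, y) :=
          (volterraComp_assoc hf hPn hf hyx).symm

theorem norm_volterraPow_le {f : ℝ × ℝ → ℂ} {a b M : ℝ}
    (hM : ∀ p ∈ Icc a b ×ˢ Icc a b, ‖f p‖ ≤ M) (n : ℕ) {x y : ℝ}
    (hay : a ≤ y) (hyx : y ≤ x) (hxb : x ≤ b) :
    ‖volterraPow f n (x, y)‖ ≤ M ^ (n + 1) * (x - y) ^ n / n.factorial := by
  induction n generalizing x with
  | zero => simpa [volterraPow] using hM (x, y) ⟨⟨hay.trans hyx, hxb⟩, hay, hyx.trans hxb⟩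
  | succ n ih =>
    have hM0 : 0 ≤ M :=
      (norm_nonneg _).trans (hM (x, y) ⟨⟨hay.trans hyx, hxb⟩, hay, hyx.trans hxb⟩)
    have hstep : ∀ ζ ∈ Ioc y x, ‖f (x, ζ) * volterraPow f n (ζ, y)‖ ≤
        M * (M ^ (n + 1) * (ζ - y) ^ n / n.factorial) := fun ζ hζ => by
      rw [norm_mul]
      exact mul_le_mul (hM (x, ζ) ⟨⟨hay.trans hyx, hxb⟩, hay.trans hζ.1.le, hζ.2.trans hxb⟩)
        (ih hζ.1.le (hζ.2.trans hxb)) (norm_nonneg _) hM0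
    calc ‖volterraPow f (n + 1) (x, y)‖
        ≤ ∫ ζ in y..x, M * (M ^ (n + 1) * (ζ - y) ^ n / n.factorial) :=
          norm_integral_le_of_norm_le hyx (ae_of_all _ hstep)
            (by apply Continuous.intervalIntegrable; fun_prop)
      _ = M ^ (n + 2) * (x - y) ^ (n + 1) / (n + 1).factorial := by
          rw [intervalIntegral.integral_const_mul, intervalIntegral.integral_div,
            intervalIntegral.integral_const_mul, integral_comp_sub_right (· ^ n), sub_self,
            integral_pow, Nat.factorial_succ]
          push_cast
          field_simp
          ring

theorem volterraPow_apply_eq_of_eqOn {f g : ℝ × ℝ → ℂ} {a b : ℝ}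
    (hfg : EqOn f g (Icc a b ×ˢ Icc a b)) (n : ℕ) {x y : ℝ}
    (hay : a ≤ y) (hyx : y ≤ x) (hxb : x ≤ b) :
    volterraPow f n (x, y) = volterraPow g n (x, y) := by
  induction n generalizing x with
  | zero => exact hfg ⟨⟨hay.trans hyx, hxb⟩, hay, hyx.trans hxb⟩
  | succ n ih =>
    refine integral_congr fun ζ hζ => ?_
    rw [uIcc_of_le hyx] at hζ
    exact congr_arg₂ (· * ·) (hfg ⟨⟨hay.trans hyx, hxb⟩, hay.trans hζ.1, hζ.2.trans hxb⟩)
      (ih hζ.1 (hζ.2.trans hxb))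

theorem hasSum_volterraPow {g : ℝ × ℝ → ℂ} (hg : Continuous g) {x y : ℝ} (hyx : y ≤ x) :
    HasSum (fun n => volterraPow g n (x, y))
      (g (x, y) + ∫ ζ in y..x, (∑' n, volterraPow g n (x, ζ)) * g (ζ, y)) := by
  obtain ⟨M, hM⟩ := (isCompact_Icc.prod isCompact_Icc).exists_bound_of_continuousOn
    (s := Icc y x ×ˢ Icc y x) hg.continuousOn
  set u : ℕ → ℝ := fun n => M ^ (n + 1) * (x - y) ^ n / n.factorial
  have hu : Summable u := ((Real.summable_pow_div_factorial (M * (x - y))).mul_left M).congr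
    fun n => by simp only [u, mul_pow]; ring
  have hbound : ∀ n, ∀ ζ ∈ Icc y x, ‖volterraPow g n (x, ζ)‖ ≤ u n := fun n ζ hζ => by
    have hM0 : 0 ≤ M := (norm_nonneg _).trans (hM (x, y) ⟨⟨hyx, le_rfl⟩, le_rfl, hyx⟩)
    refine (norm_volterraPow_le hM n hζ.1 hζ.2 le_rfl).trans ?_
    show _ ≤ M ^ (n + 1) * (x - y) ^ n / n.factorial
    gcongr
    · linarith [hζ.2]
    · exact hζ.1
  have hsum : ∀ ζ ∈ Icc y x, Summable fun n => volterraPow g n (x, ζ) := fun ζ hζ =>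
    .of_norm_bounded hu (hbound · ζ hζ)
  have hIoc : uIoc y x ⊆ Icc y x := by
    rw [uIoc_of_le hyx]
    exact Ioc_subset_Icc_self
  refine HasSum.zero_add ?_
  simp only [volterraPow_succ' hg _ hyx, volterraComp]
  refine hasSum_integral_of_dominated_convergence (fun n _ => u n * M)
    (fun n => ((continuous_volterraPow hg n).comp (by fun_prop)).mul (hg.comp (by fun_prop))
      |>.aestronglyMeasurable) (fun n => ae_of_all _ fun ζ hζ => ?_)
    (ae_of_all _ fun _ _ => hu.mul_right M) intervalIntegrable_const
    (ae_of_all _ fun ζ hζ => ?_)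
  all_goals replace hζ : ζ ∈ Icc y x := hIoc hζ
  · rw [norm_mul]
    exact mul_le_mul (hbound n ζ hζ) (hM (ζ, y) ⟨hζ, le_rfl, hyx⟩) (norm_nonneg _)
      ((norm_nonneg _).trans (hbound n ζ hζ))
  · exact (hsum ζ hζ).hasSum.mul_right _

theorem volterraNeumann_right_resolvent_general (a b : ℝ) (f : ℝ × ℝ → ℂ)
    (hf : ContinuousOn f (Set.Icc a b ×ˢ Set.Icc a b))
    (G : ℝ × ℝ → ℂ) (hG : G = fun p => ∑' n : ℕ, volterraPow f n p) :
    ∀ x ∈ Set.Icc a b, ∀ y ∈ Set.Icc a b, y ≤ x →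
      G (x, y) = f (x, y) + ∫ ζ in y..x, G (x, ζ) * f (ζ, y) := by
  intro x hx y hy hyx
  obtain ⟨g, hg, hgf⟩ := hf.exists_continuous_eqOn (isClosed_Icc.prod isClosed_Icc)
  have hG_eq : ∀ ζ ∈ Icc y x, G (x, ζ) = ∑' n, volterraPow g n (x, ζ) := fun ζ hζ => by
    rw [hG]
    exact tsum_congr fun n =>
      volterraPow_apply_eq_of_eqOn hgf.symm n (hy.1.trans hζ.1) hζ.2 hx.2
  have hf_eq : ∀ ζ ∈ Icc y x, f (ζ, y) = g (ζ, y) := fun ζ hζ =>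
    (hgf ⟨⟨hy.1.trans hζ.1, hζ.2.trans hx.2⟩, hy⟩).symm
  rw [hG_eq y ⟨le_rfl, hyx⟩, (hasSum_volterraPow hg hyx).tsum_eq, hf_eq x ⟨hyx, le_rfl⟩]
  congr 1
  refine integral_congr fun ζ hζ => ?_
  rw [uIcc_of_le hyx] at hζ
  simp only [hG_eq ζ hζ, hf_eq ζ hζ]

/-- The sum of the iterated Volterra powers is also a right ∗-resolvent of `f`. -/
theorem volterraNeumann_right_resolvent (a b : ℝ) (hab : a < b) (f : ℝ × ℝ → ℂ)
    (hf : ContinuousOn f (Set.Icc a b ×ˢ Set.Icc a b))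
    (G : ℝ × ℝ → ℂ) (hG : G = fun p => ∑' n : ℕ, volterraPow f n p) :
    ∀ x ∈ Set.Icc a b, ∀ y ∈ Set.Icc a b, y ≤ x →
      G (x, y) = f (x, y) + ∫ ζ in y..x, G (x, ζ) * f (ζ, y) :=
  volterraNeumann_right_resolvent_general a b f hf G hG
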